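/- arXiv:1512.08937 — 7 statements merged into one kernel-verified Lean document; each statement's English description precedes it below -/
import Mathlib

section
/- Let G be a finite group acting on a topological space M such that each element of G acts as a homeomorphism, let H be a subgroup of G, and let N be a closed subset of M which is an H-subset (i.e., N ∩ (G • x) = H • x for every x ∈ N). Equip N with the subspace topology and the induced H-action, and equip the orbit spaces N/H and M/G with the quotient topologies. Then the induced map ι : N/H → M/G sending the H-orbit of x ∈ N to its G-orbit is a topological embedding. -/
/-!
The induced map is continuous, and injective by the `H`-subset condition. It is closed because
its composite with `N → N/H` is `N ↪ M → M/G`: a closed embedding followed by the orbit map,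
which is closed since the saturation `⋃ g, g • C` of a closed set is a finite union of closed sets.
-/

open Pointwise

namespace MulAction

theorem isClosedMap_quotient_mk_of_finite {G M : Type*} [Group G] [Finite G]
    [TopologicalSpace M] [MulAction G M] [ContinuousConstSMul G M] :
    IsClosedMap (Quotient.mk (orbitRel G M)) := by
  intro C hC
  have hsat : Quotient.mk (orbitRel G M) ⁻¹' (Quotient.mk _ '' C) = ⋃ g : G, g • C :=
    quotient_preimage_image_eq_union_mul C
  refine isQuotientMap_quotient_mk'.isClosed_preimage.mp ?_
  exact hsat ▸ isClosed_iUnion_of_finite fun g => hC.smul g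

end MulAction

/-- Lemma 2.5: if a finite group `G` acts by homeomorphisms on a topological space `M`,
`H ≤ G` and `N` is a closed `H`-subset of `M`, then the induced map `N/H → M/G` is a
topological embedding. -/
theorem stmt_4 {G M : Type*} [Group G] [Finite G] [TopologicalSpace M] [MulAction G M]
    [ContinuousConstSMul G M] (H : Subgroup G) (N : Set M) (hNcl : IsClosed N)
    (hN : ∀ x ∈ N, N ∩ MulAction.orbit G x = MulAction.orbit H x) :
    Topology.IsEmbedding
      (Quot.lift
        (fun a : N => Quotient.mk (MulAction.orbitRel G M) (a : M))
        (fun a b hab => Quotient.sound (by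
          obtain ⟨h, hh⟩ := hab
          exact ⟨(h : G)⁻¹, by simp [← hh]⟩)) :
        Quot (fun a b : N => ∃ h : H, (h : G) • (a : M) = (b : M)) →
          Quotient (MulAction.orbitRel G M)) := by
  refine (Topology.IsClosedEmbedding.of_continuous_injective_isClosedMap ?_ ?_ ?_).isEmbedding
  · exact continuous_quot_lift _ (continuous_quotient_mk'.comp continuous_subtype_val)
  · rintro ⟨x⟩ ⟨y⟩ hxy
    obtain ⟨h, hh⟩ : (x : M) ∈ MulAction.orbit H (y : M) := hN y y.2 ▸ ⟨x.2, Quotient.exact hxy⟩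
    exact (Quot.sound ⟨h, hh⟩).symm
  · exact .of_comp_surjective Quot.mk_surjective continuous_quot_mk
      (MulAction.isClosedMap_quotient_mk_of_finite.comp hNcl.isClosedEmbedding_subtypeVal.isClosedMap)
end

section
/- Let G be a finite group acting by homeomorphisms on a Hausdorff, locally connected topological space M, let H be a subgroup of G, and let N be an H-subset of M (i.e., N ∩ (G • x) = H • x for every x ∈ N) which is locally closed in M and locally connected in its subspace topology. Then for every x ∈ N there exist: an open connected subset U of M containing x that is invariant under the stabilizer Stab_G(x), and a subset V of N containing x that is open in N, connected, invariant under Stab_H(x) = H ⊓ Stab_G(x), contained in U, closed in U, and such that V is a Stab_H(x)-subset of U with respect to the restricted Stab_G(x)-action, i.e., V ∩ (Stab_G(x) • y) = Stab_H(x) • y for every y ∈ V. -/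
open Set MulAction Pointwise

/-- Lemma 2.6: if a finite group `G` acts by homeomorphisms on a Hausdorff locally connected
space `M`, `H ≤ G`, and `N` is an `H`-subset of `M` that is locally closed in `M` and locally
connected in its subspace topology, then around every `x ∈ N` there are an open connected
`Stab_G(x)`-invariant `U ⊆ M` and a connected `Stab_H(x)`-invariant `V ⊆ N`, open in `N`,
closed in `U`, contained in `U`, which is a `Stab_H(x)`-subset of `U` for the restricted
`Stab_G(x)`-action. -/
theorem stmt_5 {G M : Type*} [Group G] [Finite G] [TopologicalSpace M] [MulAction G M]
    [ContinuousConstSMul G M] [T2Space M] [LocallyConnectedSpace M]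
    (H : Subgroup G) (N : Set M)
    (hN : ∀ x ∈ N, N ∩ MulAction.orbit G x = MulAction.orbit H x)
    (hNlocclosed : ∀ x ∈ N, ∃ U : Set M, IsOpen U ∧ x ∈ U ∧
      ∃ C : Set M, IsClosed C ∧ U ∩ N = U ∩ C)
    (hNlocconn : LocallyConnectedSpace N) :
    ∀ x ∈ N, ∃ U V : Set M,
      IsOpen U ∧ IsConnected U ∧ x ∈ U ∧
      (∀ g ∈ MulAction.stabilizer G x, ∀ u ∈ U, g • u ∈ U) ∧
      x ∈ V ∧ V ⊆ N ∧
      (∃ O : Set M, IsOpen O ∧ V = O ∩ N) ∧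
      IsConnected V ∧
      (∀ h ∈ H ⊓ MulAction.stabilizer G x, ∀ v ∈ V, h • v ∈ V) ∧
      V ⊆ U ∧
      (∃ C : Set M, IsClosed C ∧ V = U ∩ C) ∧
      ∀ y ∈ V, V ∩ MulAction.orbit (MulAction.stabilizer G x) y
          = MulAction.orbit (↥(H ⊓ MulAction.stabilizer G x)) y := by
  haveI := hNlocconn
  intro x hx
  set S := MulAction.stabilizer G x with hS
  -- N is H-invariant
  have hNinv : ∀ h ∈ H, ∀ y ∈ N, h • y ∈ N := by
    intro h hh y hy
    have : h • y ∈ MulAction.orbit H y := ⟨⟨h, hh⟩, rfl⟩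
    rw [← hN y hy] at this
    exact this.1
  -- separation: for each g ∉ S choose disjoint opens around x and g • x
  have sep : ∀ g : {g : G // g ∉ S}, ∃ A B : Set M,
      IsOpen A ∧ IsOpen B ∧ x ∈ A ∧ (g : G) • x ∈ B ∧ Disjoint A B := by
    intro g
    have hne : x ≠ (g : G) • x := by
      intro hEq
      exact g.2 (MulAction.mem_stabilizer_iff.mpr hEq.symm)
    obtain ⟨A, B, hA, hB, hxA, hxB, hAB⟩ := t2_separation hne
    exact ⟨A, B, hA, hB, hxA, hxB, hAB⟩
  choose A B hAopen hBopen hxA hgxB hABdisj using sep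
  -- W₁: separation neighborhood
  set W₁ : Set M := ⋂ g : {g : G // g ∉ S}, (A g ∩ ((g : G))⁻¹ • B g) with hW₁
  have hW₁open : IsOpen W₁ :=
    isOpen_iInter_of_finite fun g => (hAopen g).inter ((hBopen g).smul _)
  have hxW₁ : x ∈ W₁ := by
    refine mem_iInter.mpr fun g => ⟨hxA g, ?_⟩
    rw [Set.mem_smul_set_iff_inv_smul_mem, inv_inv]
    exact hgxB g
  have hsepW₁ : ∀ y z : M, y ∈ W₁ → z ∈ W₁ → ∀ g : G, z = g • y → g ∈ S := by
    intro y z hy hz g hzg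
    by_contra hgS
    have h1 := mem_iInter.mp hy ⟨g, hgS⟩
    have h2 := mem_iInter.mp hz ⟨g, hgS⟩
    have hzB : z ∈ B ⟨g, hgS⟩ := by
      have := h1.2
      rw [Set.mem_smul_set_iff_inv_smul_mem, inv_inv] at this
      rwa [hzg]
    exact (hABdisj ⟨g, hgS⟩).le_bot ⟨h2.1, hzB⟩
  -- W₂: locally closed witness
  obtain ⟨W₂, hW₂open, hxW₂, C, hCclosed, hW₂N⟩ := hNlocclosed x hx
  -- W: S-invariant open neighborhood
  set W₀ : Set M := W₁ ∩ W₂ with hW₀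
  set W : Set M := ⋂ s : S, (s : G) • W₀ with hW
  have hWopen : IsOpen W :=
    isOpen_iInter_of_finite fun s => (hW₁open.inter hW₂open).smul _
  have hxW : x ∈ W := by
    refine mem_iInter.mpr fun s => ?_
    rw [Set.mem_smul_set_iff_inv_smul_mem]
    have : (s : G)⁻¹ • x = x := MulAction.mem_stabilizer_iff.mp (inv_mem s.2)
    rw [this]
    exact ⟨hxW₁, hxW₂⟩
  have hWsub : W ⊆ W₀ := by
    intro y hy
    have := mem_iInter.mp hy (1 : S)
    rwa [Subgroup.coe_one, Set.mem_smul_set_iff_inv_smul_mem, inv_one, one_smul] at this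
  have hWinv : ∀ g ∈ S, ∀ y ∈ W, g • y ∈ W := by
    intro g hg y hy
    refine mem_iInter.mpr fun s => ?_
    rw [Set.mem_smul_set_iff_inv_smul_mem, smul_smul]
    have := mem_iInter.mp hy ⟨(g⁻¹ * (s : G) : G), mul_mem (inv_mem hg) s.2⟩
    rw [Set.mem_smul_set_iff_inv_smul_mem] at this
    rwa [mul_inv_rev, inv_inv] at this
  -- U: connected component of x in W
  set U : Set M := connectedComponentIn W x with hU
  have hUopen : IsOpen U := hWopen.connectedComponentIn
  have hUconn : IsConnected U := isConnected_connectedComponentIn_iff.mpr hxW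
  have hxU : x ∈ U := mem_connectedComponentIn hxW
  have hUW : U ⊆ W := connectedComponentIn_subset W x
  have hUinv : ∀ g ∈ S, ∀ u ∈ U, g • u ∈ U := by
    intro g hg u hu
    have himg : (g • U : Set M) ⊆ U := by
      have hconn : IsPreconnected (g • U : Set M) := by
        have : (g • U : Set M) = (fun y => g • y) '' U := rfl
        rw [this]
        exact hUconn.isPreconnected.image _ (continuous_const_smul g).continuousOn
      refine hconn.subset_connectedComponentIn ?_ ?_
      · have : g • x ∈ (g • U : Set M) := Set.smul_mem_smul_set hxU
        rw [MulAction.mem_stabilizer_iff.mp hg] at this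
        exact this
      · intro z hz
        obtain ⟨u', hu', rfl⟩ := hz
        exact hWinv g hg u' (hUW hu')
    exact himg (Set.smul_mem_smul_set hu)
  -- key property of U
  have hUkey : ∀ y z : M, y ∈ U → z ∈ U → ∀ g : G, z = g • y → g ∈ S := by
    intro y z hy hz g
    exact hsepW₁ y z (hWsub (hUW hy)).1 (hWsub (hUW hz)).1 g
  have hUN : U ∩ N = U ∩ C := by
    have hUW₂ : U ⊆ W₂ := fun y hy => (hWsub (hUW hy)).2
    ext y
    constructor
    · rintro ⟨hyU, hyN⟩
      have : y ∈ W₂ ∩ C := hW₂N ▸ ⟨hUW₂ hyU, hyN⟩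
      exact ⟨hyU, this.2⟩
    · rintro ⟨hyU, hyC⟩
      have : y ∈ W₂ ∩ N := hW₂N ▸ ⟨hUW₂ hyU, hyC⟩
      exact ⟨hyU, this.2⟩
  -- V: connected component of x in U ∩ N, built inside the subspace N
  set x' : N := ⟨x, hx⟩ with hx'
  set F : Set N := Subtype.val ⁻¹' U with hF
  have hFopen : IsOpen F := hUopen.preimage continuous_subtype_val
  have hx'F : x' ∈ F := hxU
  set s : Set N := connectedComponentIn F x' with hs
  set V : Set M := Subtype.val '' s with hV
  have hsopen : IsOpen s := hFopen.connectedComponentIn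
  have hsF : s ⊆ F := connectedComponentIn_subset F x'
  have hx's : x' ∈ s := mem_connectedComponentIn hx'F
  have hxV : x ∈ V := ⟨x', hx's, rfl⟩
  have hVN : V ⊆ N := by rintro y ⟨y', _, rfl⟩; exact y'.2
  have hVU : V ⊆ U := by rintro y ⟨y', hy', rfl⟩; exact hsF hy'
  -- V invariance under K = H ⊓ S and the subset-of-component property
  have hsmax : ∀ T : Set M, T ⊆ N → T ⊆ U → x ∈ T → IsPreconnected T → T ⊆ V := by
    intro T hTN hTU hxT hTconn
    have hTim : Subtype.val '' (Subtype.val ⁻¹' T : Set N) = T := by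
      rw [Subtype.image_preimage_coe, inter_eq_right.mpr hTN]
    have hTpre : IsPreconnected (Subtype.val ⁻¹' T : Set N) := by
      refine Topology.IsInducing.subtypeVal.isPreconnected_image.mp ?_
      rwa [hTim]
    have hsub : (Subtype.val ⁻¹' T : Set N) ⊆ s := by
      refine hTpre.subset_connectedComponentIn (x := x') hxT ?_
      intro y hy; exact hTU hy
    intro t ht
    rw [← hTim] at ht
    obtain ⟨t', ht', rfl⟩ := ht
    exact ⟨t', hsub ht', rfl⟩
  have hVinv : ∀ h ∈ H ⊓ S, ∀ v ∈ V, h • v ∈ V := by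
    intro h hh v hv
    have hsV : (h • V : Set M) ⊆ V := by
      refine hsmax _ ?_ ?_ ?_ ?_
      · rintro z ⟨w, hw, rfl⟩
        exact hNinv h hh.1 w (hVN hw)
      · rintro z ⟨w, hw, rfl⟩
        exact hUinv h hh.2 w (hVU hw)
      · refine ⟨x, hxV, ?_⟩
        exact MulAction.mem_stabilizer_iff.mp hh.2
      · have : (h • V : Set M) = (fun y => h • y) '' V := rfl
        rw [this]
        refine IsPreconnected.image ?_ _ (continuous_const_smul h).continuousOn
        exact (Topology.IsInducing.subtypeVal.isPreconnected_image.mpr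
          isPreconnected_connectedComponentIn)
    exact hsV (Set.smul_mem_smul_set hv)
  -- V is open in N
  have hVopenN : ∃ O : Set M, IsOpen O ∧ V = O ∩ N := by
    obtain ⟨O, hO, hOs⟩ := isOpen_induced_iff.mp hsopen
    refine ⟨O, hO, ?_⟩
    rw [hV, ← hOs, Subtype.image_preimage_coe, inter_comm]
  -- V is connected
  have hVconn : IsConnected V := by
    refine (isConnected_connectedComponentIn_iff.mpr hx'F).image _
      continuous_subtype_val.continuousOn
  -- V is closed in U
  have hVclosed : ∃ C' : Set M, IsClosed C' ∧ V = U ∩ C' := by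
    have hxF' : x' ∈ F := hx'F
    have hseq : s = Subtype.val '' connectedComponent (⟨x', hxF'⟩ : F) :=
      connectedComponentIn_eq_image hxF'
    obtain ⟨t, htclosed, hts⟩ :=
      isClosed_induced_iff.mp (isClosed_connectedComponent (x := (⟨x', hxF'⟩ : F)))
    obtain ⟨D, hDclosed, hDt⟩ := isClosed_induced_iff.mp htclosed
    refine ⟨C ∩ D, hCclosed.inter hDclosed, ?_⟩
    have h1 : s = t ∩ F := by
      rw [hseq, ← hts, Subtype.image_preimage_coe, inter_comm]
    have h2 : V = Subtype.val '' (t ∩ F) := by rw [hV, h1]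
    have h3 : Subtype.val '' (t ∩ F : Set N) = D ∩ U ∩ N := by
      rw [← hDt, hF, ← Set.preimage_inter, Subtype.image_preimage_coe, inter_comm]
    rw [h2, h3]
    have : D ∩ U ∩ N = D ∩ (U ∩ N) := by rw [inter_assoc]
    rw [this, hUN]
    ext z
    constructor
    · rintro ⟨hzD, hzU, hzC⟩; exact ⟨hzU, hzC, hzD⟩
    · rintro ⟨hzU, hzC, hzD⟩; exact ⟨hzD, hzU, hzC⟩
  -- orbit condition
  have horbit : ∀ y ∈ V, V ∩ MulAction.orbit S y = MulAction.orbit (↥(H ⊓ S)) y := by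
    intro y hy
    ext z
    constructor
    · rintro ⟨hzV, g, rfl⟩
      have hzN : (g : G) • y ∈ N := hVN hzV
      have hzorb : (g : G) • y ∈ N ∩ MulAction.orbit G y := ⟨hzN, (g : G), rfl⟩
      rw [hN y (hVN hy)] at hzorb
      obtain ⟨h, hhy⟩ := hzorb
      have hhS : (h : G) ∈ S := by
        refine hUkey y ((g : G) • y) (hVU hy) (hVU hzV) (h : G) ?_
        exact hhy.symm
      exact ⟨⟨(h : G), ⟨h.2, hhS⟩⟩, hhy⟩
    · rintro ⟨k, rfl⟩
      refine ⟨hVinv (k : G) k.2 y hy, ⟨(k : G), k.2.2⟩, rfl⟩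
  exact ⟨U, V, hUopen, hUconn, hxU, hUinv, hxV, hVN, hVopenN, hVconn, hVinv, hVU,
    hVclosed, horbit⟩
end

section
/- Let G be a group acting by isometries on a metric space M (i.e., dist(g • a, g • b) = dist(a, b) for all g ∈ G and a, b ∈ M). Let x, y ∈ M and δ_x, δ_y > 0 be such that dist(x, g • x) ≥ 2 δ_x for every g ∈ G with g • x ≠ x, dist(y, g • y) ≥ 2 δ_y for every g ∈ G with g • y ≠ y, and dist(x, y) < (δ_x + δ_y)/2. Then dist(x, g • y) ≥ dist(x, y) for every g ∈ G; in particular the minimum over g ∈ G of dist(x, g • y) equals dist(x, y). -/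
/-- Key estimate in Lemma 2.7: for an isometric action, if `x` and `y` are `2δ`-separated
from the nontrivial points of their orbits and `dist x y < (δx + δy)/2`, then
`dist x (g • y) ≥ dist x y` for every `g`, so the minimum over `g` equals `dist x y`. -/
theorem stmt_6 {G M : Type*} [Group G] [MetricSpace M] [MulAction G M]
    (hiso : ∀ (g : G) (a b : M), dist (g • a) (g • b) = dist a b)
    (x y : M) (δx δy : ℝ) (hδx : 0 < δx) (hδy : 0 < δy)
    (hx : ∀ g : G, g • x ≠ x → 2 * δx ≤ dist x (g • x))
    (hy : ∀ g : G, g • y ≠ y → 2 * δy ≤ dist y (g • y))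
    (hxy : dist x y < (δx + δy) / 2) :
    (∀ g : G, dist x y ≤ dist x (g • y)) ∧ (⨅ g : G, dist x (g • y)) = dist x y := by
  have h : ∀ g : G, dist x y ≤ dist x (g • y) := by
    intro g
    by_cases hgy : g • y = y
    · rw [hgy]
    by_cases hgx : g • x = x
    · have : dist x (g • y) = dist x y := by
        conv_lhs => rw [← hgx, hiso]
      rw [this]
    by_contra hlt
    push_neg at hlt
    have h1 : 2 * δy ≤ dist y (g • y) := hy g hgy
    have h2 : 2 * δx ≤ dist x (g • x) := hx g hgx
    have t1 : dist y (g • y) ≤ dist y x + dist x (g • y) := dist_triangle _ _ _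
    have t2 : dist x (g • x) ≤ dist x (g • y) + dist (g • y) (g • x) := dist_triangle _ _ _
    rw [hiso] at t2
    rw [dist_comm y x] at t1
    have hxy' : dist x y < (δx + δy) / 2 := hxy
    have hd : dist y x = dist x y := dist_comm _ _
    linarith
  refine ⟨h, le_antisymm ?_ (le_ciInf h)⟩
  have hb : BddBelow (Set.range fun g : G => dist x (g • y)) :=
    ⟨dist x y, by rintro _ ⟨g, rfl⟩; exact h g⟩
  calc (⨅ g : G, dist x (g • y)) ≤ dist x ((1 : G) • y) := ciInf_le hb 1
    _ = dist x y := by rw [one_smul]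
end

section
/- Let G be a topological group whose underlying space is T1, and let Γ ⊆ G be a nonempty finite subset. Then there exists an open neighborhood C of the identity e in G with the following property: if g₁, g₂ ∈ C and γ ∈ Γ are such that g₁⁻¹ γ g₂ ∈ Γ, then g₁⁻¹ γ g₂ = γ. -/
open Filter Topology

theorem ContinuousAt.eventually_mem_finite_imp_eq {X Y : Type*} [TopologicalSpace X]
    [TopologicalSpace Y] [T1Space Y] {f : X → Y} {x : X} (hf : ContinuousAt f x) {S : Set Y}
    (hS : S.Finite) : ∀ᶠ y in 𝓝 x, f y ∈ S → f y = f x := by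
  have hnhds : (S \ {f x})ᶜ ∈ 𝓝 (f x) :=
    (hS.sdiff (t := {f x})).isClosed.isOpen_compl.mem_nhds fun h => h.2 rfl
  filter_upwards [hf hnhds] with y hy hyS
  by_contra hne
  exact hy ⟨hyS, hne⟩

theorem stmt_7_general {G : Type*} [Group G] [TopologicalSpace G] [IsTopologicalGroup G] [T1Space G]
    (Γ : Set G) (hfin : Γ.Finite) :
    ∃ C : Set G, IsOpen C ∧ (1 : G) ∈ C ∧
      ∀ g₁ ∈ C, ∀ g₂ ∈ C, ∀ γ ∈ Γ, g₁⁻¹ * γ * g₂ ∈ Γ → g₁⁻¹ * γ * g₂ = γ := by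
  have hev : ∀ᶠ p : G × G in 𝓝 1 ×ˢ 𝓝 1,
      ∀ γ ∈ Γ, p.1⁻¹ * γ * p.2 ∈ Γ → p.1⁻¹ * γ * p.2 = γ := by
    rw [← nhds_prod_eq, eventually_all_finite hfin]
    intro γ _
    have hf : ContinuousAt (fun p : G × G => p.1⁻¹ * γ * p.2) (1, 1) := by fun_prop
    simpa using hf.eventually_mem_finite_imp_eq hfin
  obtain ⟨t, ht, htt⟩ := (eventually_prod_self_iff (r := fun g₁ g₂ =>
    ∀ γ ∈ Γ, g₁⁻¹ * γ * g₂ ∈ Γ → g₁⁻¹ * γ * g₂ = γ)).mp hev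
  obtain ⟨C, hCt, hC, h1C⟩ := mem_nhds_iff.mp ht
  exact ⟨C, hC, h1C, fun g₁ h₁ g₂ h₂ => htt g₁ (hCt h₁) g₂ (hCt h₂)⟩

/-- Lemma 4.3: if `G` is a T1 topological group and `Γ ⊆ G` is a nonempty finite subset,
then there is an open neighborhood `C` of the identity such that for `g₁, g₂ ∈ C` and
`γ ∈ Γ`, `g₁⁻¹ * γ * g₂ ∈ Γ` forces `g₁⁻¹ * γ * g₂ = γ`. -/
theorem stmt_7 {G : Type*} [Group G] [TopologicalSpace G] [IsTopologicalGroup G] [T1Space G]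
    (Γ : Set G) (hfin : Γ.Finite) (hne : Γ.Nonempty) :
    ∃ C : Set G, IsOpen C ∧ (1 : G) ∈ C ∧
      ∀ g₁ ∈ C, ∀ g₂ ∈ C, ∀ γ ∈ Γ, g₁⁻¹ * γ * g₂ ∈ Γ → g₁⁻¹ * γ * g₂ = γ :=
  stmt_7_general Γ hfin
end

section
/- Let G be a topological group whose underlying space is T1, acting on a set M. Let x ∈ M have finite stabilizer Stab_G(x), and let S ⊆ M be a full Stab_G(x)-subset of M, i.e., S is Stab_G(x)-invariant and whenever g ∈ G, y ∈ S and g • y ∈ S, then g ∈ Stab_G(x). Then there exists an open neighborhood C of the identity in G such that the map C × S → M, (g, y) ↦ g • y, is injective. -/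
/-! If `g • y = g' • y'` with `y, y' ∈ S`, fullness puts `g'⁻¹ * g` in the stabilizer. Since the
stabilizer is finite and `G` is T1, its non-identity elements form a closed set avoiding `1`, so a
small enough neighbourhood `C` of `1` has `C⁻¹ * C` meeting the stabilizer only in `1`; for
`g, g' ∈ C` this forces `g = g'`, and then `y = y'`. -/

open Pointwise Topology

theorem exists_isOpen_one_mem_inv_mul_subset {G : Type*} [Group G] [TopologicalSpace G]
    [IsTopologicalGroup G] {U : Set G} (hU : U ∈ 𝓝 1) :
    ∃ C : Set G, IsOpen C ∧ (1 : G) ∈ C ∧ C⁻¹ * C ⊆ U := by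
  obtain ⟨V, hV, hV1, hVV⟩ := exists_open_nhds_one_mul_subset hU
  refine ⟨V ∩ V⁻¹, hV.inter hV.inv, ⟨hV1, by simpa using hV1⟩, ?_⟩
  calc (V ∩ V⁻¹)⁻¹ * (V ∩ V⁻¹) ⊆ V * V := by
        gcongr
        · simpa only [Set.inter_inv, inv_inv] using Set.inter_subset_right
        · exact Set.inter_subset_left
    _ ⊆ U := hVV

theorem exists_isOpen_one_mem_inv_mul_inter_subset {G : Type*} [Group G] [TopologicalSpace G]
    [IsTopologicalGroup G] [T1Space G] {F : Set G} (hF : F.Finite) :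
    ∃ C : Set G, IsOpen C ∧ (1 : G) ∈ C ∧ C⁻¹ * C ∩ F ⊆ {1} := by
  have hU : (F \ {1})ᶜ ∈ 𝓝 (1 : G) :=
    hF.sdiff.isClosed.isOpen_compl.mem_nhds (by simp)
  obtain ⟨C, hC, hC1, hCU⟩ := exists_isOpen_one_mem_inv_mul_subset hU
  refine ⟨C, hC, hC1, fun g ⟨hgC, hgF⟩ => ?_⟩
  by_contra hg1
  exact hCU hgC ⟨hgF, hg1⟩

theorem injOn_smul_prod_of_inv_mul_inter_subset {G M : Type*} [Group G] [MulAction G M]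
    {K C : Set G} {S : Set M} (hfull : ∀ g : G, ∀ y ∈ S, g • y ∈ S → g ∈ K)
    (hC : C⁻¹ * C ∩ K ⊆ {1}) :
    Set.InjOn (fun p : G × M => p.1 • p.2) (C ×ˢ S) := by
  rintro ⟨g, y⟩ ⟨hg, hy⟩ ⟨g', y'⟩ ⟨hg', hy'⟩ (heq : g • y = g' • y')
  have hK : g'⁻¹ * g ∈ K := hfull _ y hy (by rwa [mul_smul, heq, inv_smul_smul])
  have hgg' : g'⁻¹ * g = 1 := hC ⟨Set.mul_mem_mul (Set.inv_mem_inv.mpr hg') hg, hK⟩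
  obtain rfl : g = g' := (inv_mul_eq_one.mp hgg').symm
  rw [smul_left_cancel_iff] at heq
  rw [heq]

theorem stmt_8_general {G M : Type*} [Group G] [TopologicalSpace G] [IsTopologicalGroup G] [T1Space G]
    [MulAction G M] (x : M) (hfin : Finite (MulAction.stabilizer G x))
    (S : Set M)
    (hfull : ∀ g : G, ∀ y ∈ S, g • y ∈ S → g ∈ MulAction.stabilizer G x) :
    ∃ C : Set G, IsOpen C ∧ (1 : G) ∈ C ∧
      Set.InjOn (fun p : G × M => p.1 • p.2) (C ×ˢ S) := by
  obtain ⟨C, hC, hC1, hCstab⟩ :=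
    exists_isOpen_one_mem_inv_mul_inter_subset (Set.toFinite (MulAction.stabilizer G x : Set G))
  exact ⟨C, hC, hC1, injOn_smul_prod_of_inv_mul_inter_subset hfull hCstab⟩

/-- Injectivity step in Theorem 4.4: if `G` is a T1 topological group acting on a set `M`,
`x ∈ M` has finite stabilizer and `S` is a full `Stab_G(x)`-subset of `M`, then there is an
open neighborhood `C` of the identity such that `(g, y) ↦ g • y` is injective on `C × S`. -/
theorem stmt_8 {G M : Type*} [Group G] [TopologicalSpace G] [IsTopologicalGroup G] [T1Space G]
    [MulAction G M] (x : M) (hfin : Finite (MulAction.stabilizer G x))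
    (S : Set M)
    (hinv : ∀ g ∈ MulAction.stabilizer G x, ∀ y ∈ S, g • y ∈ S)
    (hfull : ∀ g : G, ∀ y ∈ S, g • y ∈ S → g ∈ MulAction.stabilizer G x) :
    ∃ C : Set G, IsOpen C ∧ (1 : G) ∈ C ∧
      Set.InjOn (fun p : G × M => p.1 • p.2) (C ×ˢ S) :=
  stmt_8_general x hfin S hfull
end

section
/- Let Γ be a group acting on a set U, let Δ be a subgroup of Γ, and let V ⊆ U be a Δ-subset of U (i.e., V ∩ (Γ • x) = Δ • x for every x ∈ V). Let K = {δ ∈ Δ : δ • x = x for all x ∈ V} be the kernel of the Δ-action on V; then K is a normal subgroup of Δ. Suppose σ : Δ/K → Δ is a group homomorphism which is a right inverse of the canonical projection q : Δ → Δ/K (i.e., q ∘ σ = id). Let Δ' ≤ Δ be the range of σ. Then: (a) V is a Δ'-subset of U, i.e., V ∩ (Γ • x) = Δ' • x for every x ∈ V; and (b) Δ' acts effectively on V, i.e., if δ' ∈ Δ' satisfies δ' • x = x for all x ∈ V, then δ' = 1. -/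
/-- Group-action core of Proposition 5.4: if `V` is a `Δ`-subset of the `Γ`-set `U`, `K` is
the pointwise stabilizer of `V` in `Δ`, then `K` is normal in `Δ`, and any homomorphic right
inverse `σ` of the projection `Δ → Δ/K` yields a subgroup `Δ' = range σ` such that `V` is a
`Δ'`-subset of `U` on which `Δ'` acts effectively. -/
theorem stmt_10 {Γ U : Type*} [Group Γ] [MulAction Γ U] (Δ : Subgroup Γ) (V : Set U)
    (hV : ∀ x ∈ V, V ∩ MulAction.orbit Γ x = MulAction.orbit Δ x)
    (K : Subgroup Δ)
    (hK : ∀ δ : Δ, δ ∈ K ↔ ∀ x ∈ V, (δ : Γ) • x = x) :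
    K.Normal ∧
    ∀ hn : K.Normal,
      letI := hn
      ∀ σ : Δ ⧸ K →* Δ, Function.RightInverse σ (QuotientGroup.mk' K) →
        ((∀ x ∈ V, V ∩ MulAction.orbit Γ x = MulAction.orbit σ.range x) ∧
          ∀ δ' ∈ σ.range, (∀ x ∈ V, ((δ' : Δ) : Γ) • x = x) → δ' = 1) := by
  -- V is Δ-invariant
  have hinv : ∀ (δ : Δ) (x : U), x ∈ V → (δ : Γ) • x ∈ V := by
    intro δ x hx
    have : (δ : Γ) • x ∈ MulAction.orbit Δ x := ⟨δ, rfl⟩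
    rw [← hV x hx] at this
    exact this.1
  have hnorm : K.Normal := by
    constructor
    intro k hk δ
    rw [hK] at hk ⊢
    intro x hx
    have hx' : ((δ⁻¹ : Δ) : Γ) • x ∈ V := hinv δ⁻¹ x hx
    have hfix := hk _ hx'
    push_cast at hfix ⊢
    rw [mul_smul, mul_smul, hfix, ← mul_smul, mul_inv_cancel, one_smul]
  refine ⟨hnorm, fun hn σ hσ => ?_⟩
  constructor
  · intro x hx
    rw [hV x hx]
    apply Set.eq_of_subset_of_subset
    · rintro y ⟨δ, rfl⟩
      have hmem : (σ (QuotientGroup.mk' K δ))⁻¹ * δ ∈ K := by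
        have h1 : QuotientGroup.mk' K ((σ (QuotientGroup.mk' K δ))⁻¹ * δ) = 1 := by
          rw [map_mul, map_inv, hσ]
          simp
        rw [QuotientGroup.mk'_apply, QuotientGroup.eq_one_iff] at h1
        exact h1
      have key : (σ (QuotientGroup.mk' K δ) : Γ) • x = (δ : Γ) • x := by
        have hfix := (hK _).mp hmem x hx
        push_cast at hfix
        calc (σ (QuotientGroup.mk' K δ) : Γ) • x
            = (σ (QuotientGroup.mk' K δ) : Γ) •
              (((σ (QuotientGroup.mk' K δ) : Γ))⁻¹ * δ) • x := by rw [hfix]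
          _ = (δ : Γ) • x := by rw [← mul_smul]; group
      exact ⟨⟨σ (QuotientGroup.mk' K δ), ⟨_, rfl⟩⟩, key⟩
    · rintro y ⟨⟨δ', hδ'⟩, rfl⟩
      exact ⟨δ', rfl⟩
  · intro δ' hδ' hfix
    obtain ⟨g, rfl⟩ := hδ'
    have hmem : σ g ∈ K := (hK _).mpr hfix
    have hg : g = 1 := by
      have h1 := hσ g
      rw [QuotientGroup.mk'_apply] at h1
      rw [← h1, QuotientGroup.eq_one_iff]
      exact hmem
    rw [hg, map_one]
end

section
/- Let G be a group acting on a set M, let H be a subgroup of G, let N be an H-subset of M (i.e., N ∩ (G • x) = H • x for every x ∈ N), and let x ∈ N. Suppose U ⊆ M is invariant under the stabilizer Stab_G(x) and satisfies (g • U) ∩ U = ∅ for every g ∈ G with g ∉ Stab_G(x). Then U ∩ N is a Stab_H(x)-subset of U with respect to the restricted Stab_G(x)-action, where Stab_H(x) = H ⊓ Stab_G(x): that is, for every y ∈ U ∩ N one has (U ∩ N) ∩ (Stab_G(x) • y) = Stab_H(x) • y. -/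
open Pointwise

/-- Central step of Lemma 2.6: if `N` is an `H`-subset of the `G`-set `M`, `x ∈ N`, and
`U` is `Stab_G(x)`-invariant with `g • U ∩ U = ∅` for `g ∉ Stab_G(x)`, then `U ∩ N` is a
`Stab_H(x)`-subset of `U` for the restricted `Stab_G(x)`-action. -/
theorem stmt_12 {G M : Type*} [Group G] [MulAction G M] (H : Subgroup G) (N : Set M)
    (hN : ∀ x ∈ N, N ∩ MulAction.orbit G x = MulAction.orbit H x)
    (x : M) (hx : x ∈ N) (U : Set M)
    (hUinv : ∀ g ∈ MulAction.stabilizer G x, ∀ u ∈ U, g • u ∈ U)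
    (hUdisj : ∀ g : G, g ∉ MulAction.stabilizer G x → (g • U) ∩ U = ∅) :
    ∀ y ∈ U ∩ N, (U ∩ N) ∩ MulAction.orbit (MulAction.stabilizer G x) y
        = MulAction.orbit (↥(H ⊓ MulAction.stabilizer G x)) y := by
  rintro y ⟨hyU, hyN⟩
  ext z
  constructor
  · rintro ⟨⟨hzU, hzN⟩, ⟨⟨g, hg⟩, rfl⟩⟩
    -- z = g • y with g ∈ Stab_G x, z ∈ N ∩ orbit G y = orbit H y
    have hz : g • y ∈ MulAction.orbit H y := by
      rw [← hN y hyN]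
      exact ⟨hzN, ⟨g, rfl⟩⟩
    obtain ⟨⟨h, hh⟩, hhy⟩ := hz
    have hhy' : h • y = g • y := hhy
    have hstab : h ∈ MulAction.stabilizer G x := by
      by_contra hcon
      have := hUdisj h hcon
      have : h • y ∈ (h • U) ∩ U := ⟨⟨y, hyU, rfl⟩, hhy' ▸ hzU⟩
      rw [hUdisj h hcon] at this
      exact this
    exact ⟨⟨h, hh, hstab⟩, hhy'⟩
  · rintro ⟨⟨h, hh, hstab⟩, rfl⟩
    refine ⟨⟨hUinv h hstab y hyU, ?_⟩, ⟨⟨h, hstab⟩, rfl⟩⟩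
    have : h • y ∈ MulAction.orbit H y := ⟨⟨h, hh⟩, rfl⟩
    rw [← hN y hyN] at this
    exact this.1
end
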